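/- Let M be a loopless matroid of positive rank on a finite ground set. Then, as Laurent polynomials in t, the sum over all flats F of M of t^{rk F} · χ_{M_F}(t^{-1}) · χ_{M^F}(t) equals 0; equivalently, ∑_{E ≤ F ≤ G} μ(∅,E) μ(F,G) t^{rk M + rk E − rk G} = 0, where the sum ranges over triples of flats E ≤ F ≤ G of M. -/

import Mathlib

open scoped Classical

/-- A matroid on a finite ground set, presented by its rank function
(normalized, monotone, submodular, with unit increase). -/
structure FinMatroid where
  E : Type
  fintypeE : Fintype E
  deceqE : DecidableEq E
  rk : Finset E → ℕ
  rk_empty : rk ∅ = 0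
  rk_mono : ∀ ⦃S T : Finset E⦄, S ⊆ T → rk S ≤ rk T
  rk_submod : ∀ S T : Finset E, rk (S ∪ T) + rk (S ∩ T) ≤ rk S + rk T
  rk_insert_le : ∀ (S : Finset E) (x : E), rk (insert x S) ≤ rk S + 1

attribute [instance] FinMatroid.fintypeE FinMatroid.deceqE

namespace FinMatroid

/-- The rank of the matroid: the rank of the full ground set. -/
noncomputable def rank (M : FinMatroid) : ℕ := M.rk Finset.univ

/-- A flat: a set such that adding any new element increases the rank. -/
def IsFlat (M : FinMatroid) (F : Finset M.E) : Prop :=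
  ∀ x ∉ F, M.rk (insert x F) ≠ M.rk F

/-- The (finite) collection of flats of `M`. -/
noncomputable def flats (M : FinMatroid) : Finset (Finset M.E) :=
  Finset.univ.filter M.IsFlat

/-- A matroid is loopless if every singleton has rank 1. -/
def Loopless (M : FinMatroid) : Prop := ∀ x : M.E, M.rk {x} = 1

/-- The Möbius function of the lattice of flats of `M` (extended by the usual
recursion; `mu A B = 0` unless `A ⊆ B`). -/
noncomputable def mu (M : FinMatroid) (A B : Finset M.E) : ℤ :=
  if A = B then 1
  else -∑ G ∈ (M.flats.filter (fun G => A ⊆ G ∧ G ⊂ B)).attach,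
        M.mu A G.1
termination_by B.card
decreasing_by
  exact Finset.card_lt_card (Finset.mem_filter.mp G.2).2.2

/-- The characteristic polynomial `χ_M(t) = ∑_{F flat} μ(∅,F) t^(rk M - rk F)`. -/
noncomputable def charPoly (M : FinMatroid) : Polynomial ℤ :=
  ∑ F ∈ M.flats, Polynomial.C (M.mu ∅ F) * Polynomial.X ^ (M.rank - M.rk F)

/-- The localization `M_F`: the restriction of `M` to the set `F`. -/
noncomputable def localization (M : FinMatroid) (F : Finset M.E) : FinMatroid where
  E := {x : M.E // x ∈ F}
  fintypeE := inferInstance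
  deceqE := inferInstance
  rk S := M.rk (S.map (Function.Embedding.subtype _))
  rk_empty := by simpa using M.rk_empty
  rk_mono := fun S T h => M.rk_mono (Finset.map_subset_map.mpr h)
  rk_submod := fun S T => by
    try dsimp only
    rw [Finset.map_union, Finset.map_inter]
    exact M.rk_submod _ _
  rk_insert_le := fun S x => by
    try dsimp only
    rw [Finset.map_insert]
    exact M.rk_insert_le _ _

/-- The restriction `M^F` (the contraction of `M` by the flat `F`), a matroid on
the complement of `F`. -/
noncomputable def restrictionAt (M : FinMatroid) (F : Finset M.E) : FinMatroid where
  E := {x : M.E // x ∉ F}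
  fintypeE := inferInstance
  deceqE := inferInstance
  rk S := M.rk (S.map (Function.Embedding.subtype _) ∪ F) - M.rk F
  rk_empty := by simp
  rk_mono := fun S T h =>
    Nat.sub_le_sub_right
      (M.rk_mono (Finset.union_subset_union_left (Finset.map_subset_map.mpr h))) _
  rk_submod := fun S T => by
    try dsimp only
    set e := Function.Embedding.subtype (fun x : M.E => x ∉ F) with he
    have h1 : (S ∪ T).map e ∪ F = (S.map e ∪ F) ∪ (T.map e ∪ F) := by
      rw [Finset.map_union, Finset.union_union_distrib_right]
    have h2 : (S ∩ T).map e ∪ F = (S.map e ∪ F) ∩ (T.map e ∪ F) := by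
      rw [Finset.map_inter, Finset.inter_union_distrib_right]
    have h3 := M.rk_submod (S.map e ∪ F) (T.map e ∪ F)
    have h4 : M.rk F ≤ M.rk (S.map e ∪ F) := M.rk_mono Finset.subset_union_right
    have h5 : M.rk F ≤ M.rk (T.map e ∪ F) := M.rk_mono Finset.subset_union_right
    have h6 : M.rk F ≤ M.rk ((S ∩ T).map e ∪ F) := M.rk_mono Finset.subset_union_right
    have h7 : M.rk F ≤ M.rk ((S ∪ T).map e ∪ F) := M.rk_mono Finset.subset_union_right
    rw [h1] at h7 ⊢
    rw [h2] at h6 ⊢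
    omega
  rk_insert_le := fun S x => by
    try dsimp only
    set e := Function.Embedding.subtype (fun x : M.E => x ∉ F) with he
    have h1 : (insert x S).map e ∪ F = insert (e x) (S.map e ∪ F) := by
      rw [Finset.map_insert, Finset.insert_union]
    have h2 := M.rk_insert_le (S.map e ∪ F) (e x)
    have h3 : M.rk F ≤ M.rk (S.map e ∪ F) := M.rk_mono Finset.subset_union_right
    rw [h1]
    omega

lemma mem_filter' {α : Type*} {p : α → Prop} (d : DecidablePred p) {s : Finset α} {a : α} :
    a ∈ @Finset.filter α p d s ↔ a ∈ s ∧ p a :=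
  Finset.mem_filter

section Aux

variable (M : FinMatroid)

lemma rk_le_rank (S : Finset M.E) : M.rk S ≤ M.rank :=
  M.rk_mono (Finset.subset_univ S)

lemma rk_le_insert (S : Finset M.E) (x : M.E) : M.rk S ≤ M.rk (insert x S) :=
  M.rk_mono (Finset.subset_insert x S)

/-- If `x` does not increase the rank of `S`, it does not increase the rank of any
superset of `S`. -/
lemma rk_insert_eq_of_subset {S U : Finset M.E} (hSU : S ⊆ U) {x : M.E}
    (h : M.rk (insert x S) = M.rk S) : M.rk (insert x U) = M.rk U := by
  have hsub := M.rk_submod (insert x S) U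
  have h1 : insert x S ∪ U = insert x U := by
    rw [Finset.insert_union, Finset.union_eq_right.mpr hSU]
  have h2 : S ⊆ insert x S ∩ U :=
    Finset.subset_inter (Finset.subset_insert x S) hSU
  have h3 := M.rk_mono h2
  have h4 := M.rk_le_insert U x
  rw [h1, h] at hsub
  omega

/-- If `S ⊆ F` with `F` a flat and `x ∉ F`, then `x` increases the rank of `S`. -/
lemma rk_insert_of_flat {S F : Finset M.E} (hF : M.IsFlat F) (hSF : S ⊆ F)
    {x : M.E} (hx : x ∉ F) : M.rk (insert x S) = M.rk S + 1 := by
  have hne : M.rk (insert x S) ≠ M.rk S := by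
    intro h
    exact hF x hx (M.rk_insert_eq_of_subset hSF h)
  have h1 := M.rk_insert_le S x
  have h2 := M.rk_le_insert S x
  omega

lemma univ_mem_flats : (Finset.univ : Finset M.E) ∈ M.flats := by
  simp only [flats, Finset.mem_filter, Finset.mem_univ, true_and]
  intro x hx
  exact absurd (Finset.mem_univ x) hx

lemma empty_mem_flats (hM : M.Loopless) : (∅ : Finset M.E) ∈ M.flats := by
  simp only [flats, Finset.mem_filter, Finset.mem_univ, true_and]
  intro x _
  have h1 : insert x (∅ : Finset M.E) = {x} := rfl
  rw [h1, hM x, M.rk_empty]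
  omega

/-- Unfolded form of the Möbius recursion. -/
lemma mu_eq (A B : Finset M.E) :
    M.mu A B = if A = B then 1
      else -∑ G ∈ M.flats.filter (fun G => A ⊆ G ∧ G ⊂ B), M.mu A G := by
  rw [mu]
  congr 1
  exact neg_inj.mpr (Finset.sum_attach _ (fun G => M.mu A G))

lemma mu_eq_zero {A B : Finset M.E} (h : ¬A ⊆ B) : M.mu A B = 0 := by
  rw [mu_eq]
  have hne : A ≠ B := fun hAB => h (hAB ▸ Finset.Subset.refl A)
  rw [if_neg hne]
  have : M.flats.filter (fun G => A ⊆ G ∧ G ⊂ B) = ∅ := by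
    rw [Finset.filter_eq_empty_iff]
    rintro G _ ⟨h1, h2⟩
    exact h (h1.trans h2.subset)
  rw [this, Finset.sum_empty, neg_zero]

/-- The defining recursion: for a flat `A`, summing `μ(A, G)` over flats `G` in
`[A, B]` gives the delta function. -/
lemma mu_sum_right {A B : Finset M.E} (hA : A ∈ M.flats) (hB : B ∈ M.flats) :
    ∑ G ∈ M.flats.filter (fun G => A ⊆ G ∧ G ⊆ B), M.mu A G
      = if A = B then 1 else 0 := by
  by_cases hAB : A ⊆ B
  · by_cases hEq : A = B
    · subst hEq
      rw [if_pos rfl]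
      have : M.flats.filter (fun G => A ⊆ G ∧ G ⊆ A) = {A} := by
        ext G
        simp only [Finset.mem_filter, Finset.mem_singleton]
        constructor
        · rintro ⟨_, h1, h2⟩
          exact (Finset.Subset.antisymm h2 h1).symm ▸ rfl
        · rintro rfl
          exact ⟨hA, Finset.Subset.refl _, Finset.Subset.refl _⟩
      rw [this, Finset.sum_singleton, mu_eq, if_pos rfl]
    · rw [if_neg hEq]
      have hsplit : M.flats.filter (fun G => A ⊆ G ∧ G ⊆ B)
          = insert B (M.flats.filter (fun G => A ⊆ G ∧ G ⊂ B)) := by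
        ext G
        simp only [Finset.mem_insert, Finset.mem_filter]
        constructor
        · rintro ⟨hGf, h1, h2⟩
          by_cases hGB : G = B
          · exact Or.inl hGB
          · exact Or.inr ⟨hGf, h1, lt_of_le_of_ne h2 hGB⟩
        · rintro (rfl | ⟨hGf, h1, h2⟩)
          · exact ⟨hB, hAB, Finset.Subset.refl _⟩
          · exact ⟨hGf, h1, h2.subset⟩
      have hBnot : B ∉ M.flats.filter (fun G => A ⊆ G ∧ G ⊂ B) := by
        simp only [Finset.mem_filter]
        rintro ⟨_, _, h2⟩
        exact absurd rfl h2.ne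
      rw [hsplit, Finset.sum_insert hBnot, mu_eq, if_neg hEq]
      ring
  · have : M.flats.filter (fun G => A ⊆ G ∧ G ⊆ B) = ∅ := by
      rw [Finset.filter_eq_empty_iff]
      rintro G _ ⟨h1, h2⟩
      exact hAB (h1.trans h2)
    rw [this, Finset.sum_empty, if_neg (fun hEq => hAB (le_of_eq hEq))]

/-- Summing `μ(G, B)` over flats `G` in `[A, B]` also gives the delta function
(the Möbius function is a two-sided inverse of the zeta function). -/
lemma mu_sum_left {A B : Finset M.E} (hA : A ∈ M.flats) (hB : B ∈ M.flats) :
    ∑ G ∈ M.flats.filter (fun G => A ⊆ G ∧ G ⊆ B), M.mu G B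
      = if A = B then 1 else 0 := by
  classical
  let U : Matrix ↥M.flats ↥M.flats ℤ := fun X Y => M.mu X.1 Y.1
  let Z : Matrix ↥M.flats ↥M.flats ℤ := fun X Y => if X.1 ⊆ Y.1 then 1 else 0
  have hUZ : U * Z = 1 := by
    ext X Y
    rw [Matrix.mul_apply, Matrix.one_apply]
    have h1 : ∑ G : ↥M.flats, U X G * Z G Y
        = ∑ G ∈ M.flats, M.mu X.1 G * (if G ⊆ Y.1 then 1 else 0) :=
      Finset.sum_coe_sort M.flats (fun G => M.mu X.1 G * (if G ⊆ Y.1 then 1 else 0))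
    have h2 : ∀ G ∈ M.flats, M.mu X.1 G * (if G ⊆ Y.1 then 1 else 0)
        = if X.1 ⊆ G ∧ G ⊆ Y.1 then M.mu X.1 G else 0 := by
      intro G _
      by_cases ha : X.1 ⊆ G <;> by_cases hb : G ⊆ Y.1 <;>
        simp [ha, hb, M.mu_eq_zero]
    rw [h1, Finset.sum_congr rfl h2, ← Finset.sum_filter,
      M.mu_sum_right X.2 Y.2]
    by_cases h : X = Y
    · rw [if_pos h, if_pos (congrArg Subtype.val h)]
    · rw [if_neg h, if_neg (fun hv => h (Subtype.ext hv))]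
  have hZU : Z * U = 1 := mul_eq_one_comm.mp hUZ
  have := congrFun (congrFun hZU ⟨A, hA⟩) ⟨B, hB⟩
  rw [Matrix.mul_apply, Matrix.one_apply] at this
  have h1 : ∑ G : ↥M.flats, Z ⟨A, hA⟩ G * U G ⟨B, hB⟩
      = ∑ G ∈ M.flats, (if A ⊆ G then 1 else 0) * M.mu G B :=
    Finset.sum_coe_sort M.flats (fun G => (if A ⊆ G then 1 else 0) * M.mu G B)
  have h2 : ∀ G ∈ M.flats, (if A ⊆ G then (1 : ℤ) else 0) * M.mu G B
      = if A ⊆ G ∧ G ⊆ B then M.mu G B else 0 := by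
    intro G _
    by_cases ha : A ⊆ G <;> by_cases hb : G ⊆ B <;>
      simp [ha, hb, M.mu_eq_zero]
  rw [h1, Finset.sum_congr rfl h2, ← Finset.sum_filter] at this
  rw [this]
  by_cases h : A = B
  · rw [if_pos h, if_pos (Subtype.ext h)]
  · rw [if_neg h, if_neg (fun hv => h (congrArg Subtype.val hv))]

lemma mem_flats_iff {S : Finset M.E} : S ∈ M.flats ↔ M.IsFlat S := by
  simp [flats]

lemma map_subtype_subset {F : Finset M.E} (S : Finset {x // x ∈ F}) :
    S.map (Function.Embedding.subtype _) ⊆ F := by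
  intro y hy
  rcases Finset.mem_map.mp hy with ⟨a, _, rfl⟩
  exact a.2

lemma loc_flat_iff {F : Finset M.E} (hF : M.IsFlat F) (S : Finset {x // x ∈ F}) :
    (M.localization F).IsFlat S
      ↔ M.IsFlat (S.map (Function.Embedding.subtype _)) := by
  constructor
  · intro h y hy
    by_cases hyF : y ∈ F
    · have hx : (⟨y, hyF⟩ : {x // x ∈ F}) ∉ S := by
        intro hmem
        exact hy (Finset.mem_map_of_mem _ hmem)
      have := h ⟨y, hyF⟩ hx
      change M.rk ((insert ⟨y, hyF⟩ S).map (Function.Embedding.subtype _)) ≠ M.rk (S.map (Function.Embedding.subtype _)) at this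
      simpa [localization, Finset.map_insert] using this
    · have := M.rk_insert_of_flat hF (M.map_subtype_subset S) hyF
      omega
  · intro h x hx
    have hy : (Function.Embedding.subtype _) x ∉ S.map (Function.Embedding.subtype _) := by
      intro hmem
      exact hx (Finset.mem_map' _ |>.mp hmem)
    have := h _ hy
    change M.rk ((insert (⟨x.1, x.2⟩ : {y // y ∈ F}) S).map (Function.Embedding.subtype _)) ≠ M.rk (S.map (Function.Embedding.subtype _))
    simpa [localization, Finset.map_insert] using this

lemma res_flat_iff {F : Finset M.E} (S : Finset {x // x ∉ F}) :
    (M.restrictionAt F).IsFlat S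
      ↔ M.IsFlat (S.map (Function.Embedding.subtype _) ∪ F) := by
  have h2 : M.rk F ≤ M.rk (S.map (Function.Embedding.subtype _) ∪ F) :=
    M.rk_mono Finset.subset_union_right
  constructor
  · intro h y hy
    have hyF : y ∉ F := fun hyF => hy (Finset.mem_union_right _ hyF)
    have hx : (⟨y, hyF⟩ : {x // x ∉ F}) ∉ S := by
      intro hmem
      exact hy (Finset.mem_union_left _ (Finset.mem_map_of_mem _ hmem))
    have h1 := h ⟨y, hyF⟩ hx
    change M.rk ((insert ⟨y, hyF⟩ S).map (Function.Embedding.subtype _) ∪ F) - M.rk F ≠ M.rk (S.map (Function.Embedding.subtype _) ∪ F) - M.rk F at h1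
    simp only [restrictionAt, Finset.map_insert, Finset.insert_union,
      Function.Embedding.coe_subtype] at h1
    have h3 := M.rk_le_insert (S.map (Function.Embedding.subtype _) ∪ F) y
    have h4 := M.rk_insert_le (S.map (Function.Embedding.subtype _) ∪ F) y
    omega
  · intro h x hx
    have hy : x.1 ∉ S.map (Function.Embedding.subtype _) ∪ F := by
      intro hmem
      rcases Finset.mem_union.mp hmem with h1 | h1
      · exact hx (Finset.mem_map' _ |>.mp h1)
      · exact x.2 h1
    have h1 := h x.1 hy
    change M.rk ((insert (⟨x.1, x.2⟩ : {y // y ∉ F}) S).map (Function.Embedding.subtype _) ∪ F) - M.rk F ≠ M.rk (S.map (Function.Embedding.subtype _) ∪ F) - M.rk F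
    simp only [restrictionAt, Finset.map_insert, Finset.insert_union,
      Function.Embedding.coe_subtype]
    have h3 := M.rk_le_insert (S.map (Function.Embedding.subtype _) ∪ F) x.1
    have h4 := M.rk_insert_le (S.map (Function.Embedding.subtype _) ∪ F) x.1
    omega

lemma loc_rank {F : Finset M.E} : (M.localization F).rank = M.rk F := by
  have h : (Finset.univ : Finset {x // x ∈ F}).map (Function.Embedding.subtype _) = F := by
    ext y
    simp [Finset.mem_map]
  show M.rk _ = M.rk F
  erw [h]

lemma res_rank {F : Finset M.E} : (M.restrictionAt F).rank = M.rank - M.rk F := by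
  have h : (Finset.univ : Finset {x // x ∉ F}).map (Function.Embedding.subtype _) ∪ F
      = Finset.univ := by
    ext y
    simp only [Finset.mem_union, Finset.mem_map, Finset.mem_univ, iff_true]
    by_cases hy : y ∈ F
    · exact Or.inr hy
    · exact Or.inl ⟨⟨y, hy⟩, trivial, rfl⟩
  show M.rk _ - M.rk F = M.rank - M.rk F
  erw [h]
  rfl

lemma mu_loc {F : Finset M.E} (hF : M.IsFlat F) (S : Finset {x // x ∈ F}) :
    (M.localization F).mu ∅ S = M.mu ∅ (S.map (Function.Embedding.subtype _)) := by
  induction S using Finset.strongInductionOn with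
  | _ S ih =>
    erw [mu_eq, mu_eq]
    by_cases hS : S = ∅
    · subst hS
      simp
      exact fun h => absurd rfl h
    · have hS' : S.map (Function.Embedding.subtype _) ≠ ∅ := by
        simpa [Finset.map_eq_empty] using hS
      rw [if_neg (fun h => hS h.symm), if_neg (fun h => hS' h.symm)]
      congr 1
      apply Finset.sum_nbij' (i := fun T => T.map (Function.Embedding.subtype _))
        (j := fun G => G.subtype (fun x => x ∈ F))
      · intro T hT
        simp only [Finset.mem_filter] at hT ⊢
        refine ⟨(M.mem_flats_iff).mpr ((M.loc_flat_iff hF T).mp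
          ((mem_flats_iff _).mp hT.1)), Finset.empty_subset _, ?_⟩
        exact Finset.map_ssubset_map.mpr hT.2.2
      · intro G hG
        rw [Finset.mem_filter] at hG
        refine (mem_filter' _).mpr ?_
        have hGF : G ⊆ F := hG.2.2.subset.trans (M.map_subtype_subset S)
        have hmap : (G.subtype (fun x => x ∈ F)).map (Function.Embedding.subtype _) = G := by
          rw [Finset.subtype_map, Finset.filter_true_of_mem (fun x hx => hGF hx)]
        refine ⟨(mem_flats_iff _).mpr ((M.loc_flat_iff hF _).mpr ?_),
          Finset.empty_subset _, ?_⟩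
        · rw [hmap]
          exact (M.mem_flats_iff).mp hG.1
        · change Finset.subtype (fun x => x ∈ F) G ⊂ S
          rw [← Finset.map_ssubset_map (f := Function.Embedding.subtype (fun x => x ∈ F)),
            hmap]
          exact hG.2.2
      · intro T hT
        apply Finset.map_injective (Function.Embedding.subtype _)
        rw [Finset.subtype_map, Finset.filter_true_of_mem]
        intro x hx
        exact M.map_subtype_subset T hx
      · intro G hG
        rw [Finset.mem_filter] at hG
        have hGF : G ⊆ F := hG.2.2.subset.trans (M.map_subtype_subset S)
        rw [Finset.subtype_map, Finset.filter_true_of_mem (fun x hx => hGF hx)]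
      · intro T hT
        simp only [Finset.mem_filter] at hT
        exact ih T hT.2.2

lemma subtype_map_union {F : Finset M.E} (T : Finset {x // x ∉ F}) :
    (T.map (Function.Embedding.subtype _) ∪ F).subtype (fun x => x ∉ F) = T := by
  apply Finset.map_injective (Function.Embedding.subtype (fun x => x ∉ F))
  rw [Finset.subtype_map, Finset.filter_union,
    Finset.filter_true_of_mem (fun y hy => by
      rcases Finset.mem_map.mp hy with ⟨a, _, rfl⟩; exact a.2),
    Finset.filter_false_of_mem (fun x hx => not_not_intro hx), Finset.union_empty]

lemma map_subtype_union {F G : Finset M.E} (hFG : F ⊆ G) :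
    ((G.subtype (fun x => x ∉ F)).map (Function.Embedding.subtype _)) ∪ F = G := by
  rw [Finset.subtype_map]
  ext y
  simp only [Finset.mem_union, Finset.mem_filter]
  constructor
  · rintro (⟨h1, _⟩ | h1)
    · exact h1
    · exact hFG h1
  · intro hy
    by_cases hyF : y ∈ F
    · exact Or.inr hyF
    · exact Or.inl ⟨hy, hyF⟩

lemma map_union_subset_iff {F : Finset M.E} {T S : Finset {x // x ∉ F}} :
    T.map (Function.Embedding.subtype _) ∪ F ⊆ S.map (Function.Embedding.subtype _) ∪ F
      ↔ T ⊆ S := by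
  constructor
  · intro h x hx
    have h1 : (Function.Embedding.subtype _) x ∈ S.map (Function.Embedding.subtype _) ∪ F :=
      h (Finset.mem_union_left _ (Finset.mem_map_of_mem _ hx))
    rcases Finset.mem_union.mp h1 with h2 | h2
    · exact (Finset.mem_map' _).mp h2
    · exact absurd h2 x.2
  · intro h
    exact Finset.union_subset_union_left (Finset.map_subset_map.mpr h)

lemma map_union_ssubset_iff {F : Finset M.E} {T S : Finset {x // x ∉ F}} :
    T.map (Function.Embedding.subtype _) ∪ F ⊂ S.map (Function.Embedding.subtype _) ∪ F
      ↔ T ⊂ S := by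
  rw [Finset.ssubset_def, Finset.ssubset_def, M.map_union_subset_iff, M.map_union_subset_iff]

lemma mu_res {F : Finset M.E} (S : Finset {x // x ∉ F}) :
    (M.restrictionAt F).mu ∅ S = M.mu F (S.map (Function.Embedding.subtype _) ∪ F) := by
  induction S using Finset.strongInductionOn with
  | _ S ih =>
    erw [mu_eq, mu_eq]
    by_cases hS : S = ∅
    · subst hS
      simp
      exact fun h => absurd rfl h
    · have hS' : F ≠ S.map (Function.Embedding.subtype _) ∪ F := by
        intro h
        obtain ⟨x, hx⟩ := Finset.nonempty_iff_ne_empty.mpr hS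
        have h1 : x.1 ∈ S.map (Function.Embedding.subtype _) ∪ F :=
          Finset.mem_union_left _ (Finset.mem_map_of_mem _ hx)
        rw [← h] at h1
        exact x.2 h1
      rw [if_neg (fun h => hS h.symm), if_neg hS']
      congr 1
      apply Finset.sum_nbij'
        (i := fun T => T.map (Function.Embedding.subtype _) ∪ F)
        (j := fun G => G.subtype (fun x => x ∉ F))
      · intro T hT
        replace hT := (mem_filter' _).mp hT
        rw [Finset.mem_filter]
        refine ⟨(M.mem_flats_iff).mpr ((M.res_flat_iff T).mp
          ((mem_flats_iff _).mp hT.1)), Finset.subset_union_right, ?_⟩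
        exact (M.map_union_ssubset_iff).mpr hT.2.2
      · intro G hG
        rw [Finset.mem_filter] at hG
        refine (mem_filter' _).mpr ?_
        have hFG : F ⊆ G := hG.2.1
        have hmap := M.map_subtype_union hFG
        refine ⟨(mem_flats_iff _).mpr ((M.res_flat_iff _).mpr ?_),
          Finset.empty_subset _, ?_⟩
        · rw [hmap]
          exact (M.mem_flats_iff).mp hG.1
        · change Finset.subtype (fun x => x ∉ F) G ⊂ S
          rw [← M.map_union_ssubset_iff (S := S), hmap]
          exact hG.2.2
      · intro T _
        exact M.subtype_map_union T
      · intro G hG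
        rw [Finset.mem_filter] at hG
        exact M.map_subtype_union hG.2.1
      · intro T hT
        replace hT := (mem_filter' _).mp hT
        exact ih T hT.2.2

lemma sum_flats_loc {F : Finset M.E} (hF : F ∈ M.flats) (f : Finset M.E → ℚ) :
    ∑ S ∈ (M.localization F).flats, f (S.map (Function.Embedding.subtype _))
      = ∑ E ∈ M.flats.filter (fun E => E ⊆ F), f E := by
  have hFf : M.IsFlat F := (M.mem_flats_iff).mp hF
  apply Finset.sum_nbij' (i := fun S => S.map (Function.Embedding.subtype _))
    (j := fun E => E.subtype (fun x => x ∈ F))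
  · intro S hS
    rw [Finset.mem_filter]
    exact ⟨(M.mem_flats_iff).mpr ((M.loc_flat_iff hFf S).mp ((mem_flats_iff _).mp hS)),
      M.map_subtype_subset S⟩
  · intro E hE
    rw [Finset.mem_filter] at hE
    have hmap : (E.subtype (fun x => x ∈ F)).map (Function.Embedding.subtype _) = E := by
      rw [Finset.subtype_map, Finset.filter_true_of_mem (fun x hx => hE.2 hx)]
    erw [mem_flats_iff]
    rw [M.loc_flat_iff hFf, hmap]
    exact (M.mem_flats_iff).mp hE.1
  · intro S _
    apply Finset.map_injective (Function.Embedding.subtype _)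
    rw [Finset.subtype_map, Finset.filter_true_of_mem]
    intro x hx
    exact M.map_subtype_subset S hx
  · intro E hE
    rw [Finset.mem_filter] at hE
    rw [Finset.subtype_map, Finset.filter_true_of_mem (fun x hx => hE.2 hx)]
  · intro S _
    rfl

lemma sum_flats_res {F : Finset M.E} (f : Finset M.E → ℚ) :
    ∑ S ∈ (M.restrictionAt F).flats, f (S.map (Function.Embedding.subtype _) ∪ F)
      = ∑ G ∈ M.flats.filter (fun G => F ⊆ G), f G := by
  apply Finset.sum_nbij'
    (i := fun S => S.map (Function.Embedding.subtype _) ∪ F)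
    (j := fun G => G.subtype (fun x => x ∉ F))
  · intro S hS
    rw [Finset.mem_filter]
    exact ⟨(M.mem_flats_iff).mpr ((M.res_flat_iff S).mp ((mem_flats_iff _).mp hS)),
      Finset.subset_union_right⟩
  · intro G hG
    rw [Finset.mem_filter] at hG
    erw [mem_flats_iff, M.res_flat_iff, M.map_subtype_union hG.2]
    exact (M.mem_flats_iff).mp hG.1
  · intro S _
    exact M.subtype_map_union S
  · intro G hG
    rw [Finset.mem_filter] at hG
    exact M.map_subtype_union hG.2
  · intro S _
    rfl

lemma loc_rk {F : Finset M.E} (S : Finset {x // x ∈ F}) :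
    (M.localization F).rk S = M.rk (S.map (Function.Embedding.subtype _)) := rfl

lemma res_rk {F : Finset M.E} (S : Finset {x // x ∉ F}) :
    (M.restrictionAt F).rk S
      = M.rk (S.map (Function.Embedding.subtype _) ∪ F) - M.rk F := rfl

end Aux

end FinMatroid

/-- For a loopless matroid `M` of positive rank, the sum over all flats
`F` of `t^(rk F) · χ_{M_F}(t⁻¹) · χ_{M^F}(t)` vanishes identically (as a Laurent
polynomial in `t`, expressed via evaluation at every nonzero rational `t = q`). -/
theorem charPoly_convolution_eq_zero (M : FinMatroid) (hM : M.Loopless)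
    (hr : 0 < M.rank) (q : ℚ) (hq : q ≠ 0) :
    ∑ F ∈ M.flats,
      q ^ M.rk F * Polynomial.aeval q⁻¹ ((M.localization F).charPoly) *
        Polynomial.aeval q ((M.restrictionAt F).charPoly) = 0 := by
  classical
  -- Step 1: the localization factor.
  have hloc : ∀ F ∈ M.flats,
      q ^ M.rk F * Polynomial.aeval q⁻¹ ((M.localization F).charPoly)
        = ∑ E ∈ M.flats.filter (fun E => E ⊆ F), (M.mu ∅ E : ℚ) * q ^ M.rk E := by
    intro F hF
    have hFf : M.IsFlat F := (M.mem_flats_iff).mp hF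
    have h1 : Polynomial.aeval q⁻¹ ((M.localization F).charPoly)
        = ∑ S ∈ (M.localization F).flats,
            ((M.mu ∅ (S.map (Function.Embedding.subtype _)) : ℚ)
              * q⁻¹ ^ (M.rk F - M.rk (S.map (Function.Embedding.subtype _)))) := by
      simp only [FinMatroid.charPoly, map_sum, map_mul, Polynomial.aeval_C, map_pow,
        Polynomial.aeval_X, eq_intCast, map_intCast]
      apply Finset.sum_congr rfl
      intro S _
      rw [M.mu_loc hFf S, M.loc_rank]
      erw [M.loc_rk]
    calc q ^ M.rk F * Polynomial.aeval q⁻¹ ((M.localization F).charPoly)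
        = ∑ S ∈ (M.localization F).flats,
            q ^ M.rk F * ((M.mu ∅ (S.map (Function.Embedding.subtype _)) : ℚ)
              * q⁻¹ ^ (M.rk F - M.rk (S.map (Function.Embedding.subtype _)))) := by
          rw [h1, Finset.mul_sum]
      _ = ∑ E ∈ M.flats.filter (fun E => E ⊆ F),
            q ^ M.rk F * ((M.mu ∅ E : ℚ) * q⁻¹ ^ (M.rk F - M.rk E)) :=
          M.sum_flats_loc hF
            (f := fun E => q ^ M.rk F * ((M.mu ∅ E : ℚ) * q⁻¹ ^ (M.rk F - M.rk E)))
      _ = ∑ E ∈ M.flats.filter (fun E => E ⊆ F), (M.mu ∅ E : ℚ) * q ^ M.rk E := by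
          apply Finset.sum_congr rfl
          intro E hE
          obtain ⟨hEf, hEF⟩ := Finset.mem_filter.mp hE
          have hle : M.rk E ≤ M.rk F := M.rk_mono hEF
          have hsplit : q ^ M.rk F = q ^ M.rk E * q ^ (M.rk F - M.rk E) := by
            rw [← pow_add, Nat.add_sub_cancel' hle]
          rw [mul_left_comm, inv_pow, hsplit, mul_assoc,
            mul_inv_cancel₀ (pow_ne_zero _ hq), mul_one]
  -- Step 2: the restriction factor.
  have hres : ∀ F ∈ M.flats,
      Polynomial.aeval q ((M.restrictionAt F).charPoly)
        = ∑ G ∈ M.flats.filter (fun G => F ⊆ G), (M.mu F G : ℚ) * q ^ (M.rank - M.rk G) := by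
    intro F hF
    have h1 : Polynomial.aeval q ((M.restrictionAt F).charPoly)
        = ∑ S ∈ (M.restrictionAt F).flats,
            ((M.mu F (S.map (Function.Embedding.subtype _) ∪ F) : ℚ)
              * q ^ ((M.rank - M.rk F)
                  - (M.rk (S.map (Function.Embedding.subtype _) ∪ F) - M.rk F))) := by
      simp only [FinMatroid.charPoly, map_sum, map_mul, Polynomial.aeval_C, map_pow,
        Polynomial.aeval_X, eq_intCast, map_intCast]
      apply Finset.sum_congr rfl
      intro S _
      rw [M.mu_res S, M.res_rank]
      erw [M.res_rk]
    rw [h1]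
    refine (M.sum_flats_res
      (f := fun G => (M.mu F G : ℚ) * q ^ ((M.rank - M.rk F) - (M.rk G - M.rk F)))).trans ?_
    apply Finset.sum_congr rfl
    intro G hG
    obtain ⟨hGf, hFG⟩ := Finset.mem_filter.mp hG
    have h2 : M.rk F ≤ M.rk G := M.rk_mono hFG
    have h3 : M.rk G ≤ M.rank := M.rk_le_rank G
    have h4 : (M.rank - M.rk F) - (M.rk G - M.rk F) = M.rank - M.rk G := by omega
    rw [h4]
  -- Step 3: rewrite each summand as a double sum.
  have hstep : ∀ F ∈ M.flats,
      q ^ M.rk F * Polynomial.aeval q⁻¹ ((M.localization F).charPoly) *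
          Polynomial.aeval q ((M.restrictionAt F).charPoly)
        = ∑ G ∈ M.flats.filter (fun G => F ⊆ G),
            ((∑ E ∈ M.flats.filter (fun E => E ⊆ F), (M.mu ∅ E : ℚ) * q ^ M.rk E)
              * (M.mu F G : ℚ)) * q ^ (M.rank - M.rk G) := by
    intro F hF
    rw [hloc F hF, hres F hF, Finset.mul_sum]
    apply Finset.sum_congr rfl
    intro G _
    ring
  rw [Finset.sum_congr rfl hstep]
  -- Step 4: exchange the order of summation over F and G.
  have hswap : (∑ F ∈ M.flats, ∑ G ∈ M.flats.filter (fun G => F ⊆ G),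
        ((∑ E ∈ M.flats.filter (fun E => E ⊆ F), (M.mu ∅ E : ℚ) * q ^ M.rk E)
          * (M.mu F G : ℚ)) * q ^ (M.rank - M.rk G))
      = ∑ G ∈ M.flats, ∑ F ∈ M.flats.filter (fun F => F ⊆ G),
          ((∑ E ∈ M.flats.filter (fun E => E ⊆ F), (M.mu ∅ E : ℚ) * q ^ M.rk E)
            * (M.mu F G : ℚ)) * q ^ (M.rank - M.rk G) :=
    Finset.sum_comm' (fun F G => by
      simp only [Finset.mem_filter]
      tauto)
  rw [hswap]
  -- Step 5: the key Möbius cancellation for each fixed G.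
  have hkey : ∀ G ∈ M.flats,
      ∑ F ∈ M.flats.filter (fun F => F ⊆ G),
          (∑ E ∈ M.flats.filter (fun E => E ⊆ F), (M.mu ∅ E : ℚ) * q ^ M.rk E)
            * (M.mu F G : ℚ)
        = (M.mu ∅ G : ℚ) * q ^ M.rk G := by
    intro G hG
    have h1 : ∀ F ∈ M.flats.filter (fun F => F ⊆ G),
        (∑ E ∈ M.flats.filter (fun E => E ⊆ F), (M.mu ∅ E : ℚ) * q ^ M.rk E)
            * (M.mu F G : ℚ)
          = ∑ E ∈ M.flats.filter (fun E => E ⊆ F),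
              ((M.mu ∅ E : ℚ) * q ^ M.rk E) * (M.mu F G : ℚ) :=
      fun F _ => Finset.sum_mul _ _ _
    rw [Finset.sum_congr rfl h1]
    have h2 : (∑ F ∈ M.flats.filter (fun F => F ⊆ G),
          ∑ E ∈ M.flats.filter (fun E => E ⊆ F),
            ((M.mu ∅ E : ℚ) * q ^ M.rk E) * (M.mu F G : ℚ))
        = ∑ E ∈ M.flats.filter (fun E => E ⊆ G),
            ∑ F ∈ M.flats.filter (fun F => E ⊆ F ∧ F ⊆ G),
              ((M.mu ∅ E : ℚ) * q ^ M.rk E) * (M.mu F G : ℚ) :=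
      Finset.sum_comm' (fun F E => by
        simp only [Finset.mem_filter]
        constructor
        · rintro ⟨⟨hF, hFG⟩, hE, hEF⟩
          exact ⟨⟨hF, hEF, hFG⟩, hE, hEF.trans hFG⟩
        · rintro ⟨⟨hF, hEF, hFG⟩, hE, _⟩
          exact ⟨⟨hF, hFG⟩, hE, hEF⟩)
    rw [h2]
    have h3 : ∀ E ∈ M.flats.filter (fun E => E ⊆ G),
        ∑ F ∈ M.flats.filter (fun F => E ⊆ F ∧ F ⊆ G),
            ((M.mu ∅ E : ℚ) * q ^ M.rk E) * (M.mu F G : ℚ)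
          = if E = G then (M.mu ∅ E : ℚ) * q ^ M.rk E else 0 := by
      intro E hE
      obtain ⟨hEf, hEG⟩ := Finset.mem_filter.mp hE
      rw [← Finset.mul_sum]
      have h4 : ∑ F ∈ M.flats.filter (fun F => E ⊆ F ∧ F ⊆ G), (M.mu F G : ℚ)
          = if E = G then 1 else 0 := by
        rw [← Int.cast_sum, M.mu_sum_left hEf hG]
        split_ifs <;> simp
      rw [h4, mul_ite, mul_one, mul_zero]
    have hGmem : G ∈ M.flats.filter (fun E => E ⊆ G) :=
      Finset.mem_filter.mpr ⟨hG, Finset.Subset.refl G⟩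
    rw [Finset.sum_congr rfl h3, Finset.sum_ite_eq' (M.flats.filter (fun E => E ⊆ G)) G
      (fun E => (M.mu ∅ E : ℚ) * q ^ M.rk E), if_pos hGmem]
  -- Step 6: conclude.
  have hfin : ∀ G ∈ M.flats,
      ∑ F ∈ M.flats.filter (fun F => F ⊆ G),
          ((∑ E ∈ M.flats.filter (fun E => E ⊆ F), (M.mu ∅ E : ℚ) * q ^ M.rk E)
            * (M.mu F G : ℚ)) * q ^ (M.rank - M.rk G)
        = (M.mu ∅ G : ℚ) * q ^ M.rank := by
    intro G hG
    rw [← Finset.sum_mul, hkey G hG, mul_assoc, ← pow_add,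
      Nat.add_sub_cancel' (M.rk_le_rank G)]
  rw [Finset.sum_congr rfl hfin, ← Finset.sum_mul, ← Int.cast_sum]
  have hzero : ∑ G ∈ M.flats, M.mu ∅ G = 0 := by
    have h := M.mu_sum_right (M.empty_mem_flats hM) (M.univ_mem_flats)
    rw [Finset.filter_true_of_mem
      (fun G _ => ⟨Finset.empty_subset G, Finset.subset_univ G⟩)] at h
    rw [h, if_neg]
    intro hEq
    have h2 : M.rank = 0 := by
      rw [FinMatroid.rank, ← hEq, M.rk_empty]
    omega
  rw [hzero, Int.cast_zero, zero_mul]
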